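/- Let (Ω, 𝓕) be a measurable space and let E : [0, ∞) × Ω → ℝ be measurable with respect to the product of the Borel σ-algebra on [0, ∞) and 𝓕, and suppose that for every ω ∈ Ω the map t ↦ E(t, ω) is lower semicontinuous. Let J ⊆ (0, ∞) be a countable dense subset. Then the set A = {ω ∈ Ω : E(t, ω) ≤ E(0, ω) for all t ≥ 0, and for Lebesgue-almost every s > 0 one has E(t, ω) ≤ E(s, ω) for all t ≥ s} satisfies A = ⋂_{t ∈ J} ( {ω : E(t, ω) ≤ E(0, ω)} ∩ {ω : E(t, ω) ≤ E(s, ω) for Lebesgue-almost every s ∈ (0, t)} ); in particular A ∈ 𝓕. -/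

import Mathlib

/-!
Lower semicontinuity in time lets an inequality `E (t, ω) ≤ c`, known for the times `t` of a
dense set `J` lying after `s`, pass to every `t > s`. Hence it suffices to test the energy
inequality at the countably many `t ∈ J`, and after swapping the quantifiers (`J` is countable,
so "for a.e. `s`" commutes with "for all `t ∈ J`") each condition is of the form
`μ {s | E (t, ω) > E (s, ω)} = 0`, which is measurable in `ω` by the measurability of sections
of a product-measurable set.
-/

open MeasureTheory Topology Set

theorem LowerSemicontinuousWithinAt.le_of_mem_closure {α β : Type*} [TopologicalSpace α]
    [LinearOrder β] {f : α → β} {S D : Set α} {x : α} {c : β}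
    (hf : LowerSemicontinuousWithinAt f S x) (hDS : D ⊆ S) (hx : x ∈ closure D)
    (hD : ∀ y ∈ D, f y ≤ c) : f x ≤ c := by
  by_contra! hc
  have : (𝓝[D] x).NeBot := mem_closure_iff_nhdsWithin_neBot.1 hx
  have hcf : ∀ᶠ y in 𝓝[D] x, c < f y := nhdsWithin_mono x hDS (hf c hc)
  obtain ⟨y, hcy, hyD⟩ := (hcf.and self_mem_nhdsWithin).exists
  exact (hD y hyD).not_gt hcy

section EnergyInequality

variable {f : ℝ → ℝ} {J : Set ℝ}

theorem LowerSemicontinuousOn.forall_ge_le_of_forall_mem_gt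
    (hf : LowerSemicontinuousOn f (Ici 0)) (hJ : Ioi 0 ⊆ closure J) {s : ℝ} (hs : 0 ≤ s)
    (h : ∀ t ∈ J, s < t → f t ≤ f s) : ∀ t ≥ s, f t ≤ f s := by
  intro t hts
  rcases hts.eq_or_lt with rfl | hst
  · exact le_rfl
  have ht_closure : t ∈ closure (Ioi s ∩ J) :=
    isOpen_Ioi.inter_closure ⟨hst, hJ (hs.trans_lt hst)⟩
  exact LowerSemicontinuousWithinAt.le_of_mem_closure (hf t (hs.trans hst.le))
    (fun u hu => hs.trans (le_of_lt hu.1)) ht_closure fun u hu => h u hu.2 hu.1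

theorem LowerSemicontinuousOn.forall_ge_zero_le_iff
    (hf : LowerSemicontinuousOn f (Ici 0)) (hJ_sub : J ⊆ Ioi 0) (hJ_dense : Ioi 0 ⊆ closure J) :
    (∀ t ≥ (0 : ℝ), f t ≤ f 0) ↔ ∀ t ∈ J, f t ≤ f 0 :=
  ⟨fun h t ht => h t (le_of_lt (hJ_sub ht)),
    fun h => hf.forall_ge_le_of_forall_mem_gt hJ_dense le_rfl fun t ht _ => h t ht⟩

theorem ae_restrict_Ioo_iff_ae_restrict_Ioi {p : ℝ → Prop} {a b : ℝ} :
    (∀ᵐ s ∂(volume.restrict (Ioo a b)), p s) ↔ ∀ᵐ s ∂(volume.restrict (Ioi a)), s < b → p s := by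
  rw [ae_restrict_iff' measurableSet_Ioo, ae_restrict_iff' measurableSet_Ioi]
  simp only [mem_Ioo, mem_Ioi, and_imp]

theorem LowerSemicontinuousOn.ae_forall_ge_le_iff
    (hf : LowerSemicontinuousOn f (Ici 0)) (hJ_count : J.Countable)
    (hJ_dense : Ioi 0 ⊆ closure J) :
    (∀ᵐ s ∂(volume.restrict (Ioi 0)), ∀ t ≥ s, f t ≤ f s) ↔
      ∀ t ∈ J, ∀ᵐ s ∂(volume.restrict (Ioo 0 t)), f t ≤ f s := by
  simp only [ae_restrict_Ioo_iff_ae_restrict_Ioi]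
  rw [← ae_ball_iff hJ_count]
  refine Filter.eventually_congr ?_
  filter_upwards [ae_restrict_mem measurableSet_Ioi] with s hs
  exact ⟨fun h t _ hst => h t hst.le,
    hf.forall_ge_le_of_forall_mem_gt hJ_dense (le_of_lt hs)⟩

end EnergyInequality

theorem measurableSet_setOf_ae_prodMk {α Ω : Type*} [MeasurableSpace α] [MeasurableSpace Ω]
    {μ : Measure α} [SFinite μ] {p : α × Ω → Prop} (hp : MeasurableSet {x | p x}) :
    MeasurableSet {ω | ∀ᵐ a ∂μ, p (a, ω)} :=
  -- `∀ᵐ a ∂μ, q a` is by definition `μ {a | ¬ q a} = 0`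
  measurable_measure_prodMk_right hp.compl (measurableSet_singleton 0)

theorem setOf_energyInequality_eq_iInter {Ω : Type*} (E : ℝ × Ω → ℝ)
    (hlsc : ∀ ω : Ω, LowerSemicontinuousOn (fun t => E (t, ω)) (Ici 0))
    {J : Set ℝ} (hJ_count : J.Countable) (hJ_sub : J ⊆ Ioi 0) (hJ_dense : Ioi 0 ⊆ closure J) :
    {ω : Ω | (∀ t ≥ (0 : ℝ), E (t, ω) ≤ E (0, ω)) ∧
        ∀ᵐ s ∂(volume.restrict (Ioi 0)), ∀ t ≥ s, E (t, ω) ≤ E (s, ω)}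
      = ⋂ t ∈ J, ({ω : Ω | E (t, ω) ≤ E (0, ω)} ∩
          {ω : Ω | ∀ᵐ s ∂(volume.restrict (Ioo 0 t)), E (t, ω) ≤ E (s, ω)}) := by
  ext ω
  simp only [mem_ofPred_eq, mem_iInter, mem_inter_iff, imp_and, forall_and,
    (hlsc ω).forall_ge_zero_le_iff hJ_sub hJ_dense, (hlsc ω).ae_forall_ge_le_iff hJ_count hJ_dense]

/-- For a jointly measurable energy functional `E` which is lower semicontinuous in time
for every `ω`, the set `A` of paths satisfying the energy inequality for all pairs of
times (a.e. `s`, all `t ≥ s`, including `s = 0`) equals the countable intersection over a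
countable dense set `J ⊆ (0, ∞)` of the sets `{E (t, ·) ≤ E (0, ·)} ∩ {E (t, ·) ≤ E (s, ·)
for a.e. s ∈ (0, t)}`; in particular `A` is measurable. -/
theorem energy_set_eq_iInter_and_measurable {Ω : Type*} [MeasurableSpace Ω]
    (E : ℝ × Ω → ℝ) (hE : Measurable E)
    (hlsc : ∀ ω : Ω, LowerSemicontinuousOn (fun t => E (t, ω)) (Set.Ici (0 : ℝ)))
    (J : Set ℝ) (hJ_count : J.Countable) (hJ_sub : J ⊆ Set.Ioi (0 : ℝ))
    (hJ_dense : Set.Ioi (0 : ℝ) ⊆ closure J) :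
    {ω : Ω | (∀ t ≥ (0 : ℝ), E (t, ω) ≤ E (0, ω)) ∧
        ∀ᵐ s ∂(volume.restrict (Set.Ioi (0 : ℝ))), ∀ t ≥ s, E (t, ω) ≤ E (s, ω)}
      = ⋂ t ∈ J, ({ω : Ω | E (t, ω) ≤ E (0, ω)} ∩
          {ω : Ω | ∀ᵐ s ∂(volume.restrict (Set.Ioo (0 : ℝ) t)), E (t, ω) ≤ E (s, ω)}) ∧
    MeasurableSet
      {ω : Ω | (∀ t ≥ (0 : ℝ), E (t, ω) ≤ E (0, ω)) ∧
        ∀ᵐ s ∂(volume.restrict (Set.Ioi (0 : ℝ))), ∀ t ≥ s, E (t, ω) ≤ E (s, ω)} := by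
  have hset := setOf_energyInequality_eq_iInter E hlsc hJ_count hJ_sub hJ_dense
  have hE_section (t : ℝ) : Measurable fun ω => E (t, ω) := hE.comp measurable_prodMk_left
  have hE_shift (t : ℝ) : Measurable fun p : ℝ × Ω => E (t, p.2) :=
    hE.comp (measurable_const.prodMk measurable_snd)
  refine ⟨hset, hset ▸ MeasurableSet.biInter hJ_count fun t _ => ?_⟩
  exact (measurableSet_le (hE_section t) (hE_section 0)).inter
    (measurableSet_setOf_ae_prodMk (measurableSet_le (hE_shift t) hE))
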